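/- arXiv:2402.15603 — 2 statements merged into one kernel-verified Lean document; each statement's English description precedes it below -/
import Mathlib

section
/- Let b₀, b₁ > 0 and η₀, η₁ ∈ (0,1]. Then (Lap(b₀) ⊗ Lap(b₁)){(l₀,l₁) ∈ ℝ² : D(l₀,l₁) > err*(G(l₀,l₁)) + (5/2)·(b₀·log(1/η₀) + b₁·log(1/η₁))} ≤ η₀ + η₁. (Utility guarantee of Theorem 2: with probability at least 1 − η₀ − η₁ over the independent Laplace noises, the prediction-change sum of Algorithm 2's classifier exceeds the optimal prediction-change sum among classifiers with the same statistical parity gap by at most (5/2)(log(1/η₀)/(n₀ε₂) + log(1/η₁)/(n₁ε₃)), where b₀ = 1/(n₀ε₂) and b₁ = 1/(n₁ε₃).) -/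
/-!
If the noises are small, `|l₀| ≤ t₀` and `|l₁| ≤ t₁`, then since clipping to `[0, 1]` is
1-Lipschitz the perturbed rates are within `t₀`, `t₁` of `α`, `β`. In either branch the
prediction-change sum `D` is then within `t₀ + t₁` of `±(α - β)` and the gap is
`G = |±(α - β) - D|`, so `D + G ≤ |α - β| + 2 (t₀ + t₁)`. A pair of classifiers with parity gap
at most `γ` changes at least `|α - β| - γ` predictions, so `err*(G) ≥ |α - β| - G` and
`D ≤ err*(G) + 2 (t₀ + t₁)`. Hence the bad event lies in `{|l₀| > t₀} ∪ {|l₁| > t₁}`, and a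
`Lap b` variable exceeds `b log (1 / η)` in absolute value with probability `η`.
-/

open MeasureTheory

/-- The Laplace distribution on `ℝ` with scale `b`. -/
noncomputable def Lap (b : ℝ) : Measure ℝ :=
  volume.withDensity fun x => ENNReal.ofReal ((2 * b)⁻¹ * Real.exp (-|x| / b))

/-- Projection onto `[0,1]`. -/
noncomputable def clip (x : ℝ) : ℝ := min (max x 0) 1

/-- The statistical parity gap of Algorithm 2's classifier as a function of the Laplace
noise realizations `(l₀, l₁)`, with clipped perturbed rates `α̃ = [α+l₀]₀¹`,
`β̃ = [β+l₁]₀¹` (division by zero yields `0`, as in Lean's convention). -/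
noncomputable def G (α β l₀ l₁ : ℝ) : ℝ :=
  let αt := clip (α + l₀)
  let βt := clip (β + l₁)
  if βt ≤ αt then
    |α * (αt + βt) / (2 * αt) - β - (1 - β) * (αt - βt) / (2 * (1 - βt))|
  else
    |β * (αt + βt) / (2 * βt) - α - (1 - α) * (βt - αt) / (2 * (1 - αt))|

/-- The prediction-change sum of Algorithm 2's classifier relative to the input
classifiers, as a function of the Laplace noise realizations `(l₀, l₁)`. -/
noncomputable def Dsum (α β l₀ l₁ : ℝ) : ℝ :=
  let αt := clip (α + l₀)
  let βt := clip (β + l₁)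
  if βt ≤ αt then
    α * (αt - βt) / (2 * αt) + (1 - β) * (αt - βt) / (2 * (1 - βt))
  else
    β * (βt - αt) / (2 * βt) + (1 - α) * (βt - αt) / (2 * (1 - αt))

/-- `err*(γ)`: the optimal prediction-change sum among pairs of measurable classifiers
whose statistical parity gap is at most `γ`. -/
noncomputable def errStar {𝒳 : Type*} [MeasurableSpace 𝒳]
    (μ₀ μ₁ : Measure 𝒳) (h₀ h₁ : 𝒳 → Bool) (γ : ℝ) : ℝ :=
  sInf { r : ℝ | ∃ g₀ g₁ : 𝒳 → Bool, Measurable g₀ ∧ Measurable g₁ ∧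
    |(μ₀ {x | g₀ x = true}).toReal - (μ₁ {x | g₁ x = true}).toReal| ≤ γ ∧
    r = (μ₀ {x | g₀ x ≠ h₀ x}).toReal + (μ₁ {x | g₁ x ≠ h₁ x}).toReal }

open Set Real

section Laplace

variable {b : ℝ}

lemma Lap_Ioi (hb : 0 < b) {t : ℝ} (ht : 0 ≤ t) :
    Lap b (Ioi t) = ENNReal.ofReal (exp (-t / b) / 2) := by
  have hdens : EqOn (fun x => ENNReal.ofReal ((2 * b)⁻¹ * exp (-|x| / b)))
      (fun x => ENNReal.ofReal ((2 * b)⁻¹ * exp (-b⁻¹ * x))) (Ioi t) := fun x hx => by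
    dsimp only
    rw [abs_of_pos (ht.trans_lt hx), neg_div, neg_mul, div_eq_inv_mul]
  have hneg : -b⁻¹ < 0 := neg_neg_of_pos (inv_pos.mpr hb)
  rw [Lap, withDensity_apply _ measurableSet_Ioi, setLIntegral_congr_fun measurableSet_Ioi hdens,
    ← ofReal_integral_eq_lintegral_ofReal ((integrableOn_exp_mul_Ioi hneg t).const_mul _)
      (.of_forall fun x => by positivity),
    integral_const_mul, integral_exp_mul_Ioi hneg]
  congr 1
  field_simp

lemma Lap_Iic (hb : 0 < b) {t : ℝ} (ht : t ≤ 0) :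
    Lap b (Iic t) = ENNReal.ofReal (exp (t / b) / 2) := by
  have hdens : EqOn (fun x => ENNReal.ofReal ((2 * b)⁻¹ * exp (-|x| / b)))
      (fun x => ENNReal.ofReal ((2 * b)⁻¹ * exp (b⁻¹ * x))) (Iic t) := fun x hx => by
    dsimp only
    rw [abs_of_nonpos (le_trans hx ht), neg_neg, div_eq_inv_mul]
  have hpos : 0 < b⁻¹ := inv_pos.mpr hb
  rw [Lap, withDensity_apply _ measurableSet_Iic, setLIntegral_congr_fun measurableSet_Iic hdens,
    ← ofReal_integral_eq_lintegral_ofReal ((integrableOn_exp_mul_Iic hpos t).const_mul _)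
      (.of_forall fun x => by positivity),
    integral_const_mul, integral_exp_mul_Iic hpos]
  congr 1
  field_simp

lemma isProbabilityMeasure_Lap (hb : 0 < b) : IsProbabilityMeasure (Lap b) := by
  constructor
  rw [← Iic_union_Ioi (a := (0 : ℝ)), measure_union (Iic_disjoint_Ioi le_rfl) measurableSet_Ioi,
    Lap_Iic hb le_rfl, Lap_Ioi hb le_rfl, ← ENNReal.ofReal_add (by positivity) (by positivity)]
  norm_num

lemma Lap_lt_abs_le (hb : 0 < b) {t : ℝ} (ht : 0 ≤ t) :
    Lap b {x | t < |x|} ≤ ENNReal.ofReal (exp (-t / b)) := by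
  have hsub : {x : ℝ | t < |x|} ⊆ Iic (-t) ∪ Ioi t := fun x (hx : t < |x|) => by
    rcases lt_abs.mp hx with h | h
    · exact Or.inr h
    · exact Or.inl (by simp only [mem_Iic]; linarith)
  calc Lap b {x | t < |x|} ≤ Lap b (Iic (-t)) + Lap b (Ioi t) :=
        (measure_mono hsub).trans (measure_union_le _ _)
    _ = ENNReal.ofReal (exp (-t / b)) := by
        rw [Lap_Iic hb (neg_nonpos.mpr ht), Lap_Ioi hb ht,
          ← ENNReal.ofReal_add (by positivity) (by positivity), add_halves]

lemma Lap_mul_log_lt_abs_le (hb : 0 < b) {η : ℝ} (hη : η ∈ Ioc 0 1) :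
    Lap b {x | b * log (1 / η) < |x|} ≤ ENNReal.ofReal η := by
  have hlog : 0 ≤ log (1 / η) := log_nonneg (one_le_one_div hη.1 hη.2)
  convert Lap_lt_abs_le hb (mul_nonneg hb.le hlog) using 2
  rw [neg_div, mul_div_cancel_left₀ _ hb.ne', one_div, log_inv, neg_neg, exp_log hη.1]

end Laplace

section Classifiers

variable {𝒳 : Type*} [MeasurableSpace 𝒳]

lemma measureReal_le_add_measureReal_ne {μ : Measure 𝒳} [IsFiniteMeasure μ] (g h : 𝒳 → Bool) :
    μ.real {x | g x = true} ≤ μ.real {x | h x = true} + μ.real {x | g x ≠ h x} := by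
  have hsub : {x | g x = true} ⊆ {x | h x = true} ∪ {x | g x ≠ h x} := fun x (hx : g x = true) => by
    by_cases hh : h x = true
    · exact Or.inl hh
    · exact Or.inr (by simp_all)
  exact (measureReal_mono hsub).trans (measureReal_union_le _ _)

lemma abs_measureReal_sub_le {μ : Measure 𝒳} [IsFiniteMeasure μ] (g h : 𝒳 → Bool) :
    |μ.real {x | g x = true} - μ.real {x | h x = true}| ≤ μ.real {x | g x ≠ h x} := by
  have hgh := measureReal_le_add_measureReal_ne (μ := μ) g h
  have hhg := measureReal_le_add_measureReal_ne (μ := μ) h g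
  simp only [ne_comm (a := h _)] at hhg
  rw [abs_sub_le_iff]
  constructor <;> linarith

lemma abs_sub_sub_le_errStar (μ₀ μ₁ : Measure 𝒳) [IsFiniteMeasure μ₀] [IsFiniteMeasure μ₁]
    (h₀ h₁ : 𝒳 → Bool) {γ : ℝ} (hγ : 0 ≤ γ) :
    |μ₀.real {x | h₀ x = true} - μ₁.real {x | h₁ x = true}| - γ ≤ errStar μ₀ μ₁ h₀ h₁ γ := by
  refine le_csInf ⟨_, fun _ => false, fun _ => false, measurable_const, measurable_const,
    by simpa using hγ, rfl⟩ ?_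
  rintro r ⟨g₀, g₁, -, -, hgap, rfl⟩
  have d₀ := abs_measureReal_sub_le (μ := μ₀) g₀ h₀
  have d₁ := abs_measureReal_sub_le (μ := μ₁) g₁ h₁
  simp only [← measureReal_def] at hgap ⊢
  have htri₀ := abs_sub_le (μ₀.real {x | h₀ x = true}) (μ₀.real {x | g₀ x = true})
    (μ₁.real {x | h₁ x = true})
  have htri₁ := abs_sub_le (μ₀.real {x | g₀ x = true}) (μ₁.real {x | g₁ x = true})
    (μ₁.real {x | h₁ x = true})
  rw [abs_sub_comm] at d₀
  linarith

end Classifiers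

lemma abs_mul_sub_mul_le {x y p q : ℝ} (hp : p ∈ Icc 0 1) (hq : q ∈ Icc 0 1) :
    |x * p - y * q| ≤ |x| + |y| := by
  calc |x * p - y * q| ≤ |x| * |p| + |y| * |q| := by
        rw [← abs_mul, ← abs_mul]; exact abs_sub _ _
    _ ≤ |x| + |y| := by
        rw [abs_of_nonneg hp.1, abs_of_nonneg hq.1]
        gcongr
        · exact mul_le_of_le_one_right (abs_nonneg x) hp.2
        · exact mul_le_of_le_one_right (abs_nonneg y) hq.2

-- For `u = 0` or `v = 1` both sides degenerate through division by zero; otherwise the gap is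
-- `|(a - b) - D|` and `D - (a - b)` combines `u - a` and `v - b` with weights in `[0, 1]`.
lemma change_add_gap_le {a b u v : ℝ} (hu : u ≤ 1) (hv : 0 ≤ v) (hvu : v ≤ u) :
    a * (u - v) / (2 * u) + (1 - b) * (u - v) / (2 * (1 - v)) +
        |a * (u + v) / (2 * u) - b - (1 - b) * (u - v) / (2 * (1 - v))| ≤
      |a - b| + 2 * (|u - a| + |v - b|) := by
  rcases hv.trans hvu |>.eq_or_lt with rfl | hu₀
  · obtain rfl : v = 0 := le_antisymm hvu hv
    simp only [sub_zero, mul_zero, zero_div, add_zero, zero_add, zero_sub, abs_neg]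
    linarith [abs_nonneg (a - b), le_abs_self b, abs_nonneg a, abs_nonneg b]
  rcases hvu.trans hu |>.eq_or_lt with rfl | hv₁
  · obtain rfl : u = 1 := le_antisymm hu hvu
    norm_num
    positivity
  set D := a * (u - v) / (2 * u) + (1 - b) * (u - v) / (2 * (1 - v))
  have hgap : a * (u + v) / (2 * u) - b - (1 - b) * (u - v) / (2 * (1 - v)) = (a - b) - D := by
    simp only [D]; field_simp; ring
  have hweight₀ : 1 - (u - v) / (2 * u) ∈ Icc 0 1 := by
    constructor
    · rw [sub_nonneg, div_le_one (by positivity)]; linarith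
    · rw [sub_le_self_iff]; exact div_nonneg (by linarith) (by positivity)
  have hweight₁ : 1 - (u - v) / (2 * (1 - v)) ∈ Icc 0 1 := by
    constructor
    · rw [sub_nonneg, div_le_one (by linarith)]; linarith
    · rw [sub_le_self_iff]; exact div_nonneg (by linarith) (by linarith)
  have hD : D - (a - b) =
      (u - a) * (1 - (u - v) / (2 * u)) - (v - b) * (1 - (u - v) / (2 * (1 - v))) := by
    simp only [D]; field_simp; ring
  have hclose : |D - (a - b)| ≤ |u - a| + |v - b| := hD ▸ abs_mul_sub_mul_le hweight₀ hweight₁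
  rw [hgap, abs_sub_comm]
  linarith [abs_sub_abs_le_abs_sub D (a - b), le_abs_self D]

lemma zero_le_clip (x : ℝ) : 0 ≤ clip x := le_min (le_max_right _ _) zero_le_one

lemma clip_le_one (x : ℝ) : clip x ≤ 1 := min_le_right _ _

lemma abs_clip_sub_clip_le (x y : ℝ) : |clip x - clip y| ≤ |x - y| :=
  (abs_min_sub_min_le_max _ _ _ _).trans <| by
    simpa using abs_max_sub_max_le_max x 0 y 0

lemma abs_clip_add_sub_le {x : ℝ} (hx : x ∈ Icc 0 1) (l : ℝ) : |clip (x + l) - x| ≤ |l| := by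
  have hclip : clip x = x := by rw [clip, max_eq_left hx.1, min_eq_left hx.2]
  simpa [hclip] using abs_clip_sub_clip_le (x + l) x

lemma G_nonneg (α β l₀ l₁ : ℝ) : 0 ≤ G α β l₀ l₁ := by
  simp only [G]
  split_ifs <;> exact abs_nonneg _

lemma Dsum_add_G_le {α β : ℝ} (hα : α ∈ Icc 0 1) (hβ : β ∈ Icc 0 1) (l₀ l₁ : ℝ) :
    Dsum α β l₀ l₁ + G α β l₀ l₁ ≤ |α - β| + 2 * (|l₀| + |l₁|) := by
  have hu := abs_clip_add_sub_le hα l₀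
  have hv := abs_clip_add_sub_le hβ l₁
  simp only [Dsum, G]
  split_ifs with h
  · linarith [change_add_gap_le (a := α) (b := β) (clip_le_one _) (zero_le_clip _) h]
  · have := change_add_gap_le (a := β) (b := α) (clip_le_one _) (zero_le_clip _) (not_le.mp h).le
    rw [abs_sub_comm β α, add_comm (clip (β + l₁))] at this
    linarith

lemma prod_setOf_fst_mem_or_snd_mem_le {X Y : Type*} [MeasurableSpace X] [MeasurableSpace Y]
    {μ : Measure X} {ν : Measure Y} [IsProbabilityMeasure μ] [IsProbabilityMeasure ν]
    (s : Set X) (t : Set Y) :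
    (μ.prod ν) {p | p.1 ∈ s ∨ p.2 ∈ t} ≤ μ s + ν t := by
  have hsplit : {p : X × Y | p.1 ∈ s ∨ p.2 ∈ t} = s ×ˢ univ ∪ univ ×ˢ t := by
    ext p; simp
  rw [hsplit]
  refine (measure_union_le _ _).trans_eq ?_
  rw [Measure.prod_prod, Measure.prod_prod, measure_univ, measure_univ, mul_one, one_mul]

theorem algorithm2_utility_whp_general
    {𝒳 : Type*} [MeasurableSpace 𝒳]
    (μ₀ μ₁ : Measure 𝒳) [IsProbabilityMeasure μ₀] [IsProbabilityMeasure μ₁]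
    (h₀ h₁ : 𝒳 → Bool)
    (α β : ℝ)
    (hα : α = (μ₀ {x | h₀ x = true}).toReal)
    (hβ : β = (μ₁ {x | h₁ x = true}).toReal)
    (b₀ b₁ : ℝ) (hb₀ : 0 < b₀) (hb₁ : 0 < b₁)
    (η₀ η₁ : ℝ) (hη₀ : η₀ ∈ Set.Ioc (0:ℝ) 1) (hη₁ : η₁ ∈ Set.Ioc (0:ℝ) 1) :
    ((Lap b₀).prod (Lap b₁))
        {p : ℝ × ℝ | Dsum α β p.1 p.2 >
          errStar μ₀ μ₁ h₀ h₁ (G α β p.1 p.2) +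
            (5 / 2) * (b₀ * Real.log (1 / η₀) + b₁ * Real.log (1 / η₁))}
      ≤ ENNReal.ofReal (η₀ + η₁) := by
  rw [← measureReal_def] at hα hβ
  have := isProbabilityMeasure_Lap hb₀
  have := isProbabilityMeasure_Lap hb₁
  have hα₀₁ : α ∈ Icc 0 1 := hα ▸ ⟨measureReal_nonneg, measureReal_le_one⟩
  have hβ₀₁ : β ∈ Icc 0 1 := hβ ▸ ⟨measureReal_nonneg, measureReal_le_one⟩
  set t₀ := b₀ * log (1 / η₀)
  set t₁ := b₁ * log (1 / η₁)
  have ht : 0 ≤ t₀ + t₁ := add_nonneg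
    (mul_nonneg hb₀.le (log_nonneg (one_le_one_div hη₀.1 hη₀.2)))
    (mul_nonneg hb₁.le (log_nonneg (one_le_one_div hη₁.1 hη₁.2)))
  have hbad : {p : ℝ × ℝ | Dsum α β p.1 p.2 > errStar μ₀ μ₁ h₀ h₁ (G α β p.1 p.2) + 5 / 2 * (t₀ + t₁)}
      ⊆ {p | p.1 ∈ {x | t₀ < |x|} ∨ p.2 ∈ {x | t₁ < |x|}} := by
    intro p hp
    simp only [mem_ofPred_eq] at hp ⊢
    by_contra! hsmall
    have hD := Dsum_add_G_le hα₀₁ hβ₀₁ p.1 p.2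
    have herr := abs_sub_sub_le_errStar μ₀ μ₁ h₀ h₁ (G_nonneg α β p.1 p.2)
    rw [← hα, ← hβ] at herr
    linarith
  calc _ ≤ Lap b₀ {x | t₀ < |x|} + Lap b₁ {x | t₁ < |x|} :=
        (measure_mono hbad).trans (prod_setOf_fst_mem_or_snd_mem_le _ _)
    _ ≤ ENNReal.ofReal η₀ + ENNReal.ofReal η₁ :=
        add_le_add (Lap_mul_log_lt_abs_le hb₀ hη₀) (Lap_mul_log_lt_abs_le hb₁ hη₁)
    _ = ENNReal.ofReal (η₀ + η₁) := (ENNReal.ofReal_add hη₀.1.le hη₁.1.le).symm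

/-- **Theorem 2 (utility guarantee).** With probability at least `1 − η₀ − η₁` over the
independent Laplace noises, the prediction-change sum of Algorithm 2's classifier exceeds
the optimal prediction-change sum among classifiers with the same statistical parity gap
by at most `(5/2)·(b₀ log(1/η₀) + b₁ log(1/η₁))`. -/
theorem algorithm2_utility_whp
    {𝒳 : Type*} [MeasurableSpace 𝒳] [Nonempty 𝒳]
    (μ₀ μ₁ : Measure 𝒳) [IsProbabilityMeasure μ₀] [IsProbabilityMeasure μ₁]
    (h₀ h₁ : 𝒳 → Bool) (hm₀ : Measurable h₀) (hm₁ : Measurable h₁)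
    (α β : ℝ)
    (hα : α = (μ₀ {x | h₀ x = true}).toReal)
    (hβ : β = (μ₁ {x | h₁ x = true}).toReal)
    (b₀ b₁ : ℝ) (hb₀ : 0 < b₀) (hb₁ : 0 < b₁)
    (η₀ η₁ : ℝ) (hη₀ : η₀ ∈ Set.Ioc (0:ℝ) 1) (hη₁ : η₁ ∈ Set.Ioc (0:ℝ) 1) :
    ((Lap b₀).prod (Lap b₁))
        {p : ℝ × ℝ | Dsum α β p.1 p.2 >
          errStar μ₀ μ₁ h₀ h₁ (G α β p.1 p.2) +
            (5 / 2) * (b₀ * Real.log (1 / η₀) + b₁ * Real.log (1 / η₁))}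
      ≤ ENNReal.ofReal (η₀ + η₁) :=
  algorithm2_utility_whp_general μ₀ μ₁ h₀ h₁ α β hα hβ b₀ b₁ hb₀ hb₁ η₀ η₁ hη₀ hη₁
end

section
/- Let h₀, h₁ : 𝒳 → {0,1} be measurable classifiers with α := μ₀({h₀ = 1}) and β := μ₁({h₁ = 1}), and let α̃ ∈ (0,1] and β̃ ∈ [0,1) with β̃ ≤ α̃; put d₀ := α̃ − α and d₁ := β̃ − β. Let Δ := |α·(α̃+β̃)/(2α̃) − β − (1−β)·(α̃−β̃)/(2(1−β̃))| (the statistical parity gap of Algorithm 2's classifier) and D := α·(α̃−β̃)/(2α̃) + (1−β)·(α̃−β̃)/(2(1−β̃)) (its prediction-change sum). Then D ≤ err*(Δ) + (5/2)·(|d₀| + |d₁|), where err*(Δ) is the infimum over pairs of measurable classifiers ĥ₀, ĥ₁ : 𝒳 → {0,1} satisfying |μ₀({ĥ₀=1}) − μ₁({ĥ₁=1})| ≤ Δ of μ₀({ĥ₀ ≠ h₀}) + μ₁({ĥ₁ ≠ h₁}). -/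
open MeasureTheory

private lemma measure_true_le_aux {𝒳 : Type*} [MeasurableSpace 𝒳]
    (μ : Measure 𝒳) [IsProbabilityMeasure μ] (g h : 𝒳 → Bool) :
    (μ {x | g x = true}).toReal ≤
      (μ {x | h x = true}).toReal + (μ {x | g x ≠ h x}).toReal := by
  have hsub : {x | g x = true} ⊆ {x | h x = true} ∪ {x | g x ≠ h x} := by
    intro x hx
    by_cases hh : h x = true
    · exact Or.inl hh
    · exact Or.inr (by simp_all)
  have hle : μ {x | g x = true} ≤ μ {x | h x = true} + μ {x | g x ≠ h x} :=
    (measure_mono hsub).trans (measure_union_le _ _)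
  calc (μ {x | g x = true}).toReal
      ≤ (μ {x | h x = true} + μ {x | g x ≠ h x}).toReal :=
        ENNReal.toReal_mono (ENNReal.add_ne_top.mpr ⟨measure_ne_top _ _, measure_ne_top _ _⟩) hle
    _ = (μ {x | h x = true}).toReal + (μ {x | g x ≠ h x}).toReal :=
        ENNReal.toReal_add (measure_ne_top _ _) (measure_ne_top _ _)

private lemma abs_measure_true_sub_le {𝒳 : Type*} [MeasurableSpace 𝒳]
    (μ : Measure 𝒳) [IsProbabilityMeasure μ] (g h : 𝒳 → Bool) :
    |(μ {x | g x = true}).toReal - (μ {x | h x = true}).toReal| ≤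
      (μ {x | g x ≠ h x}).toReal := by
  have hsymm : {x | h x ≠ g x} = {x | g x ≠ h x} := by
    ext x; exact ne_comm
  have h1 := measure_true_le_aux μ g h
  have h2 := measure_true_le_aux μ h g
  rw [hsymm] at h2
  rw [abs_le]
  constructor <;> linarith

/-- Per-realization utility bound underlying Theorem 2: the prediction-change sum `D` of
Algorithm 2's classifier is at most `err*(Δ) + (5/2)·(|d₀| + |d₁|)`, where `Δ` is its
statistical parity gap and `d₀, d₁` are the clipped Laplace noise realizations. -/
theorem algorithm2_utility_per_realization
    {𝒳 : Type*} [MeasurableSpace 𝒳] [Nonempty 𝒳]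
    (μ₀ μ₁ : Measure 𝒳) [IsProbabilityMeasure μ₀] [IsProbabilityMeasure μ₁]
    (h₀ h₁ : 𝒳 → Bool) (hm₀ : Measurable h₀) (hm₁ : Measurable h₁)
    (α β : ℝ)
    (hα : α = (μ₀ {x | h₀ x = true}).toReal)
    (hβ : β = (μ₁ {x | h₁ x = true}).toReal)
    (αt βt : ℝ) (hαt : αt ∈ Set.Ioc (0:ℝ) 1) (hβt : βt ∈ Set.Ico (0:ℝ) 1)
    (hle : βt ≤ αt)
    (d₀ d₁ : ℝ) (hd₀ : d₀ = αt - α) (hd₁ : d₁ = βt - β)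
    (Δ D : ℝ)
    (hΔ : Δ = |α * (αt + βt) / (2 * αt) - β - (1 - β) * (αt - βt) / (2 * (1 - βt))|)
    (hD : D = α * (αt - βt) / (2 * αt) + (1 - β) * (αt - βt) / (2 * (1 - βt))) :
    D ≤ errStar μ₀ μ₁ h₀ h₁ Δ + (5 / 2) * (|d₀| + |d₁|) := by
  obtain ⟨hαt0, hαt1⟩ := hαt
  obtain ⟨hβt0, hβt1⟩ := hβt
  have hαt' : αt ≠ 0 := ne_of_gt hαt0
  have hβt' : (1 : ℝ) - βt ≠ 0 := by linarith
  have hΔ0 : 0 ≤ Δ := hΔ ▸ abs_nonneg _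
  -- Δ = |(α - β) - D|
  have hsD : Δ = |(α - β) - D| := by
    rw [hΔ, hD]
    congr 1
    field_simp
    ring
  -- key identity for D
  have hkey : D = (α - β) + (αt - α) * (1 - (αt - βt) / (2 * αt))
      - (βt - β) * (1 - (αt - βt) / (2 * (1 - βt))) := by
    rw [hD]
    field_simp
    ring
  have hc₀0 : 0 ≤ (αt - βt) / (2 * αt) := div_nonneg (by linarith) (by linarith)
  have hc₀1 : (αt - βt) / (2 * αt) ≤ 1 := by
    rw [div_le_one (by linarith)]; linarith
  have hc₁0 : 0 ≤ (αt - βt) / (2 * (1 - βt)) := div_nonneg (by linarith) (by linarith)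
  have hc₁1 : (αt - βt) / (2 * (1 - βt)) ≤ 1 := by
    rw [div_le_one (by linarith)]; linarith
  have habs₀ : d₀ ≤ |d₀| := le_abs_self d₀
  have habs₀' : -d₀ ≤ |d₀| := neg_le_abs d₀
  have habs₁ : d₁ ≤ |d₁| := le_abs_self d₁
  have habs₁' : -d₁ ≤ |d₁| := neg_le_abs d₁
  have habsnn₀ : 0 ≤ |d₀| := abs_nonneg d₀
  have habsnn₁ : 0 ≤ |d₁| := abs_nonneg d₁
  -- D ≤ (α - β) + |d₀| + |d₁|
  have hDle : D ≤ (α - β) + (|d₀| + |d₁|) := by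
    have p₀ : 0 ≤ (|d₀| - d₀) * (1 - (αt - βt) / (2 * αt)) :=
      mul_nonneg (by linarith) (by linarith)
    have p₀' : 0 ≤ |d₀| * ((αt - βt) / (2 * αt)) := mul_nonneg habsnn₀ hc₀0
    have p₁ : 0 ≤ (|d₁| + d₁) * (1 - (αt - βt) / (2 * (1 - βt))) :=
      mul_nonneg (by linarith) (by linarith)
    have p₁' : 0 ≤ |d₁| * ((αt - βt) / (2 * (1 - βt))) := mul_nonneg habsnn₁ hc₁0
    have hd₀' : αt - α = d₀ := by linarith
    have hd₁' : βt - β = d₁ := by linarith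
    rw [hd₀', hd₁'] at hkey
    nlinarith [hkey]
  -- lower bound on every element of the errStar set
  have hlb : ∀ r ∈ { r : ℝ | ∃ g₀ g₁ : 𝒳 → Bool, Measurable g₀ ∧ Measurable g₁ ∧
      |(μ₀ {x | g₀ x = true}).toReal - (μ₁ {x | g₁ x = true}).toReal| ≤ Δ ∧
      r = (μ₀ {x | g₀ x ≠ h₀ x}).toReal + (μ₁ {x | g₁ x ≠ h₁ x}).toReal },
      D - (5 / 2) * (|d₀| + |d₁|) ≤ r := by
    rintro r ⟨g₀, g₁, -, -, hgap, rfl⟩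
    set a := (μ₀ {x | g₀ x = true}).toReal with ha
    set b := (μ₁ {x | g₁ x = true}).toReal with hb
    set r₀ := (μ₀ {x | g₀ x ≠ h₀ x}).toReal with hr₀
    set r₁ := (μ₁ {x | g₁ x ≠ h₁ x}).toReal with hr₁
    have hr₀0 : 0 ≤ r₀ := ENNReal.toReal_nonneg
    have hr₁0 : 0 ≤ r₁ := ENNReal.toReal_nonneg
    have h0 : |a - α| ≤ r₀ := by
      rw [hα]; exact abs_measure_true_sub_le μ₀ g₀ h₀
    have h1 : |b - β| ≤ r₁ := by
      rw [hβ]; exact abs_measure_true_sub_le μ₁ g₁ h₁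
    obtain ⟨h0a, h0b⟩ := abs_le.mp h0
    obtain ⟨h1a, h1b⟩ := abs_le.mp h1
    rw [hsD] at hgap
    obtain ⟨hga, hgb⟩ := abs_le.mp hgap
    rcases abs_cases ((α - β) - D) with ⟨heq, hsgn⟩ | ⟨heq, hsgn⟩ <;>
      rw [heq] at hga hgb
    · linarith
    · rcases le_or_gt 0 (α - β) with hs | hs
      · linarith
      · linarith
  -- the errStar set is nonempty
  have hne : ∃ r, r ∈ { r : ℝ | ∃ g₀ g₁ : 𝒳 → Bool, Measurable g₀ ∧ Measurable g₁ ∧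
      |(μ₀ {x | g₀ x = true}).toReal - (μ₁ {x | g₁ x = true}).toReal| ≤ Δ ∧
      r = (μ₀ {x | g₀ x ≠ h₀ x}).toReal + (μ₁ {x | g₁ x ≠ h₁ x}).toReal } := by
    refine ⟨_, (fun _ => true), (fun _ => true), measurable_const, measurable_const, ?_, rfl⟩
    have e₀ : {x : 𝒳 | (fun _ => true) x = true} = Set.univ := by ext x; simp
    rw [e₀, measure_univ, measure_univ]
    simpa using hΔ0
  have : D - (5 / 2) * (|d₀| + |d₁|) ≤ errStar μ₀ μ₁ h₀ h₁ Δ := by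
    rw [errStar]
    exact le_csInf hne hlb
  linarith
end
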